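/- For α, β > 0, set δ = α² - 3β² and γ = 3α² - β². Then the breather B(t,x) = 2√2 · ∂ₓ[arctan((β/α) · sin(α(x+δt)) / cosh(β(x+γt)))] is a classical solution of the focusing mKdV equation ∂ₜu + ∂ₓₓₓu + ∂ₓ(u³) = 0 on ℝ × ℝ. -/

import Mathlib

/-!
The breather is `2√2 ∂ₓ v` with `v = arctan ((β/α) sin θ / cosh φ)`, `θ = α (x + δ t)`,
`φ = β (x + γ t)`. Every derivative of `v` along a line of the `(θ, φ)`-plane is a rational function
of `sin θ, cos θ, sinh φ, cosh φ` whose denominator is a power of `α² cosh² φ + β² sin² θ > 0`.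
For the given `δ, γ`, clearing denominators in the potential equation `v_t + v_xxx + 8 v_x³ = 0`
leaves a multiple of `(sin² θ + cos² θ) - (cosh² φ - sinh² φ) = 0`. Differentiating it in `x` and
using `∂ₓ v_t = ∂ₜ v_x` gives the mKdV equation for `2√2 v_x`.
-/

open Real

theorem HasDerivAt.quotient_rule_deriv {n n₁ d d₁ : ℝ → ℝ} {n₂ d₂ x : ℝ}
    (hn : HasDerivAt n (n₁ x) x) (hn₁ : HasDerivAt n₁ n₂ x)
    (hd : HasDerivAt d (d₁ x) x) (hd₁ : HasDerivAt d₁ d₂ x) (hdx : d x ≠ 0) :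
    HasDerivAt (fun y => (n₁ y * d y - n y * d₁ y) / d y ^ 2)
      (((n₂ * d x - n x * d₂) * d x - 2 * (n₁ x * d x - n x * d₁ x) * d₁ x) / d x ^ 3) x := by
  refine (((hn₁.fun_mul hd).fun_sub (hn.fun_mul hd₁)).fun_div (hd.fun_pow 2)
    (pow_ne_zero 2 hdx)).congr_deriv ?_
  field_simp
  ring

noncomputable section

namespace MKdVBreather

variable (α β : ℝ)

/- `rate α β p q θ φ = num / den` is the derivative of `arctan ((β/α) sin θ / cosh φ)` when the
phases move with speeds `(p, q)`; the subscripted quantities are derivatives along speeds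
`(a, b)`. -/
def num (p q θ φ : ℝ) : ℝ := α * β * (p * cos θ * cosh φ - q * sin θ * sinh φ)

def num₁ (p q a b θ φ : ℝ) : ℝ :=
  α * β * (-(p * a + q * b) * sin θ * cosh φ + (p * b - q * a) * cos θ * sinh φ)

def num₂ (p q a b θ φ : ℝ) : ℝ :=
  α * β * (-(p * a + q * b) * (a * cos θ * cosh φ + b * sin θ * sinh φ)
    + (p * b - q * a) * (b * cos θ * cosh φ - a * sin θ * sinh φ))

def den (θ φ : ℝ) : ℝ := α ^ 2 * cosh φ ^ 2 + β ^ 2 * sin θ ^ 2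

def den₁ (a b θ φ : ℝ) : ℝ := 2 * (α ^ 2 * b * cosh φ * sinh φ + β ^ 2 * a * sin θ * cos θ)

def den₂ (a b θ φ : ℝ) : ℝ :=
  2 * (α ^ 2 * b ^ 2 * (cosh φ ^ 2 + sinh φ ^ 2) + β ^ 2 * a ^ 2 * (cos θ ^ 2 - sin θ ^ 2))

def rate (p q θ φ : ℝ) : ℝ := num α β p q θ φ / den α β θ φ

def rate₁ (p q a b θ φ : ℝ) : ℝ :=
  (num₁ α β p q a b θ φ * den α β θ φ - num α β p q θ φ * den₁ α β a b θ φ) / den α β θ φ ^ 2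

def rate₂ (p q a b θ φ : ℝ) : ℝ :=
  ((num₂ α β p q a b θ φ * den α β θ φ - num α β p q θ φ * den₂ α β a b θ φ) * den α β θ φ
    - 2 * (num₁ α β p q a b θ φ * den α β θ φ - num α β p q θ φ * den₁ α β a b θ φ)
      * den₁ α β a b θ φ) / den α β θ φ ^ 3

theorem den_pos (hα : α ≠ 0) (θ φ : ℝ) : 0 < den α β θ φ := by
  have := cosh_pos φ
  unfold den
  positivity

theorem rate₁_comm (p q a b θ φ : ℝ) : rate₁ α β p q a b θ φ = rate₁ α β a b p q θ φ := by
  unfold rate₁ num₁ num den₁ den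
  ring

section Curve

variable {θ φ : ℝ → ℝ} {a b y : ℝ} (hθ : HasDerivAt θ a y) (hφ : HasDerivAt φ b y)
include hθ hφ

theorem hasDerivAt_num (p q : ℝ) :
    HasDerivAt (fun y => num α β p q (θ y) (φ y)) (num₁ α β p q a b (θ y) (φ y)) y := by
  refine ((((hθ.cos.const_mul p).fun_mul hφ.cosh).fun_sub
    ((hθ.sin.const_mul q).fun_mul hφ.sinh)).const_mul (α * β)).congr_deriv ?_
  unfold num₁; ring

theorem hasDerivAt_num₁ (p q : ℝ) :
    HasDerivAt (fun y => num₁ α β p q a b (θ y) (φ y)) (num₂ α β p q a b (θ y) (φ y)) y := by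
  refine ((((hθ.sin.const_mul (-(p * a + q * b))).fun_mul hφ.cosh).fun_add
    ((hθ.cos.const_mul (p * b - q * a)).fun_mul hφ.sinh)).const_mul (α * β)).congr_deriv ?_
  unfold num₂; ring

theorem hasDerivAt_den :
    HasDerivAt (fun y => den α β (θ y) (φ y)) (den₁ α β a b (θ y) (φ y)) y := by
  refine (((hφ.cosh.fun_pow 2).const_mul (α ^ 2)).fun_add
    ((hθ.sin.fun_pow 2).const_mul (β ^ 2))).congr_deriv ?_
  unfold den₁; push_cast; ring

theorem hasDerivAt_den₁ :
    HasDerivAt (fun y => den₁ α β a b (θ y) (φ y)) (den₂ α β a b (θ y) (φ y)) y := by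
  refine ((((hφ.cosh.const_mul (α ^ 2 * b)).fun_mul hφ.sinh).fun_add
    ((hθ.sin.const_mul (β ^ 2 * a)).fun_mul hθ.cos)).const_mul 2).congr_deriv ?_
  unfold den₂; ring

theorem hasDerivAt_arctan_div (hα : α ≠ 0) :
    HasDerivAt (fun y => arctan (β / α * sin (θ y) / cosh (φ y))) (rate α β a b (θ y) (φ y)) y := by
  refine ((hθ.sin.const_mul (β / α)).fun_div hφ.cosh (cosh_pos _).ne').arctan.congr_deriv ?_
  have := cosh_pos (φ y)
  unfold rate num den
  field_simp

theorem hasDerivAt_rate (hα : α ≠ 0) (p q : ℝ) :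
    HasDerivAt (fun y => rate α β p q (θ y) (φ y)) (rate₁ α β p q a b (θ y) (φ y)) y :=
  (hasDerivAt_num α β hθ hφ p q).fun_div (hasDerivAt_den α β hθ hφ) (den_pos α β hα _ _).ne'

theorem hasDerivAt_rate₁ (hα : α ≠ 0) (p q : ℝ) :
    HasDerivAt (fun y => rate₁ α β p q a b (θ y) (φ y)) (rate₂ α β p q a b (θ y) (φ y)) y :=
  (hasDerivAt_num α β hθ hφ p q).quotient_rule_deriv (hasDerivAt_num₁ α β hθ hφ p q)
    (hasDerivAt_den α β hθ hφ) (hasDerivAt_den₁ α β hθ hφ) (den_pos α β hα _ _).ne'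

end Curve

variable {α β}

/- The potential form `v_xxx + v_t + 8 v_x³ = 0` of the equation. -/
theorem rate₂_eq {δ γ : ℝ} (hα : α ≠ 0) (hδ : δ = α ^ 2 - 3 * β ^ 2) (hγ : γ = 3 * α ^ 2 - β ^ 2)
    (θ φ : ℝ) :
    rate₂ α β α β α β θ φ = -rate α β (α * δ) (β * γ) θ φ - 8 * rate α β α β θ φ ^ 3 := by
  have hD := (den_pos α β hα θ φ).ne'
  unfold rate₂ rate
  field_simp
  subst hδ hγ
  unfold num num₁ num₂ den den₁ den₂
  linear_combination 6 * α ^ 2 * β ^ 2 * (α * β * (α * cos θ * cosh φ - β * sin θ * sinh φ)) *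
    (α ^ 2 * cosh φ ^ 2 + β ^ 2 * sin θ ^ 2) * (sin_sq_add_cos_sq θ - cosh_sq_sub_sinh_sq φ)

theorem deriv_deriv_rate {θ φ : ℝ → ℝ} {a b : ℝ} (hα : α ≠ 0)
    (hθ : ∀ y, HasDerivAt θ a y) (hφ : ∀ y, HasDerivAt φ b y) (p q : ℝ) :
    deriv (deriv fun y => rate α β p q (θ y) (φ y)) = fun y => rate₂ α β p q a b (θ y) (φ y) := by
  have h : deriv (fun y => rate α β p q (θ y) (φ y)) = fun y => rate₁ α β p q a b (θ y) (φ y) :=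
    funext fun y => (hasDerivAt_rate α β (hθ y) (hφ y) hα p q).deriv
  exact h ▸ funext fun y => (hasDerivAt_rate₁ α β (hθ y) (hφ y) hα p q).deriv

theorem deriv_deriv_deriv_rate {δ γ : ℝ} {θ φ : ℝ → ℝ} (hα : α ≠ 0)
    (hδ : δ = α ^ 2 - 3 * β ^ 2) (hγ : γ = 3 * α ^ 2 - β ^ 2)
    (hθ : ∀ y, HasDerivAt θ α y) (hφ : ∀ y, HasDerivAt φ β y) (x : ℝ) :
    deriv (deriv (deriv fun y => rate α β α β (θ y) (φ y))) x =
      -rate₁ α β (α * δ) (β * γ) α β (θ x) (φ x)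
        - 24 * rate α β α β (θ x) (φ x) ^ 2 * rate₁ α β α β α β (θ x) (φ x) := by
  simp only [deriv_deriv_rate hα hθ hφ, rate₂_eq hα hδ hγ]
  rw [((hasDerivAt_rate α β (hθ x) (hφ x) hα _ _).fun_neg.fun_sub
    (((hasDerivAt_rate α β (hθ x) (hφ x) hα _ _).fun_pow 3).const_mul 8)).deriv]
  push_cast
  ring

end MKdVBreather

end

open MKdVBreather in
theorem mKdV_breather_solves_general (α β δ γ : ℝ) (hα : 0 < α)
    (hδ : δ = α ^ 2 - 3 * β ^ 2) (hγ : γ = 3 * α ^ 2 - β ^ 2) :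
    let B : ℝ → ℝ → ℝ := fun t x =>
      2 * Real.sqrt 2 *
        deriv (fun y => Real.arctan ((β / α) * Real.sin (α * (y + δ * t)) /
          Real.cosh (β * (y + γ * t)))) x
    ∀ t x : ℝ,
      deriv (fun t' => B t' x) t + deriv (deriv (deriv (B t))) x
        + deriv (fun y => (B t y) ^ 3) x = 0 := by
  intro B t x
  have hα₀ : α ≠ 0 := hα.ne'
  set θ : ℝ → ℝ → ℝ := fun t y => α * (y + δ * t)
  set φ : ℝ → ℝ → ℝ := fun t y => β * (y + γ * t)
  have hθ (s y : ℝ) : HasDerivAt (θ s) α y := by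
    simpa using ((hasDerivAt_id y).add_const (δ * s)).const_mul α
  have hφ (s y : ℝ) : HasDerivAt (φ s) β y := by
    simpa using ((hasDerivAt_id y).add_const (γ * s)).const_mul β
  have hB (s : ℝ) : B s = fun y => 2 * √2 * rate α β α β (θ s y) (φ s y) :=
    funext fun y => congrArg (2 * √2 * ·) (hasDerivAt_arctan_div α β (hθ s y) (hφ s y) hα₀).deriv
  have h_t : deriv (fun s => B s x) t = 2 * √2 * rate₁ α β α β (α * δ) (β * γ) (θ t x) (φ t x) := by
    have hθ_t : HasDerivAt (fun s => θ s x) (α * δ) t := by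
      simpa using (((hasDerivAt_id t).const_mul δ).const_add x).const_mul α
    have hφ_t : HasDerivAt (fun s => φ s x) (β * γ) t := by
      simpa using (((hasDerivAt_id t).const_mul γ).const_add x).const_mul β
    simp only [hB]
    exact ((hasDerivAt_rate α β hθ_t hφ_t hα₀ α β).const_mul _).deriv
  have h_xxx : deriv (deriv (deriv (B t))) x =
      2 * √2 * (-rate₁ α β (α * δ) (β * γ) α β (θ t x) (φ t x)
        - 24 * rate α β α β (θ t x) (φ t x) ^ 2 * rate₁ α β α β α β (θ t x) (φ t x)) := by
    simp only [hB, deriv_const_mul_field', deriv_deriv_deriv_rate hα₀ hδ hγ (hθ t) (hφ t)]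
  have h_cube : deriv (fun y => B t y ^ 3) x = 3 * (2 * √2 * rate α β α β (θ t x) (φ t x)) ^ 2
      * (2 * √2 * rate₁ α β α β α β (θ t x) (φ t x)) := by
    rw [hB]
    exact (((hasDerivAt_rate α β (hθ t x) (hφ t x) hα₀ α β).const_mul _).fun_pow 3).deriv
  rw [h_t, h_xxx, h_cube, rate₁_comm]
  linear_combination 24 * √2 * rate α β α β (θ t x) (φ t x) ^ 2 * rate₁ α β α β α β (θ t x) (φ t x)
    * Real.sq_sqrt zero_le_two

/-- The mKdV breather is a classical solution of the focusing mKdV equation. -/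
theorem mKdV_breather_solves (α β δ γ : ℝ) (hα : 0 < α) (hβ : 0 < β)
    (hδ : δ = α ^ 2 - 3 * β ^ 2) (hγ : γ = 3 * α ^ 2 - β ^ 2) :
    let B : ℝ → ℝ → ℝ := fun t x =>
      2 * Real.sqrt 2 *
        deriv (fun y => Real.arctan ((β / α) * Real.sin (α * (y + δ * t)) /
          Real.cosh (β * (y + γ * t)))) x
    ∀ t x : ℝ,
      deriv (fun t' => B t' x) t + deriv (deriv (deriv (B t))) x
        + deriv (fun y => (B t y) ^ 3) x = 0 :=
  mKdV_breather_solves_general α β δ γ hα hδ hγ
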